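/- arXiv:2505.10178 — 3 statements merged into one kernel-verified Lean document; each statement's English description precedes it below -/
import Mathlib

section
/- Let A₁, A₂ be real s×s matrices all of whose entries are integers. Then the joint spectral radius of the pair is never strictly between 0 and 1: either JSR(A₁, A₂) = 0 or JSR(A₁, A₂) ≥ 1. -/
open Matrix

/-- Operator norm on real s×s matrices induced by the Euclidean norm. -/
noncomputable def l2OpNorm {s : ℕ} (A : Matrix (Fin s) (Fin s) ℝ) : ℝ :=
  ‖Matrix.toEuclideanCLM (𝕜 := ℝ) A‖

/-- Spectral radius of a real matrix viewed as a complex matrix. -/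
noncomputable def specRad {s : ℕ} (A : Matrix (Fin s) (Fin s) ℝ) : ℝ :=
  (spectralRadius ℂ (A.map (Complex.ofReal : ℝ → ℂ))).toReal

/-- The ordered product `A (w (n-1)) * ⋯ * A (w 0)`. -/
noncomputable def wordProd {s J n : ℕ} (A : Fin J → Matrix (Fin s) (Fin s) ℝ)
    (w : Fin n → Fin J) : Matrix (Fin s) (Fin s) ℝ :=
  ((List.ofFn fun i => A (w i)).reverse).prod

/-- Joint spectral radius of a finite family of real s×s matrices. -/
noncomputable def JSR {s J : ℕ} (A : Fin J → Matrix (Fin s) (Fin s) ℝ) : ℝ :=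
  ⨅ n : {m : ℕ // 1 ≤ m}, ⨆ w : Fin (n : ℕ) → Fin J,
    l2OpNorm (wordProd A w) ^ (1 / ((n : ℕ) : ℝ))

/-- The pair has the finiteness property. -/
def FinitenessProperty {s : ℕ} (A : Fin 2 → Matrix (Fin s) (Fin s) ℝ) : Prop :=
  ∃ n : ℕ, 1 ≤ n ∧ ∃ w : Fin n → Fin 2,
    specRad (wordProd A w) ^ (1 / (n : ℝ)) = JSR A

/-! Word products of integer matrices are integer matrices, and an integer matrix of operator
norm below one is zero because every entry is bounded by the operator norm. If `JSR A < 1`, some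
length `n ≥ 1` has all word products of norm below one, hence all of them vanish, and the `n`-th
term of the infimum defining the JSR is already `0`. -/

namespace Matrix

variable {n : Type*} [Fintype n] [DecidableEq n]

theorem norm_apply_le_norm_toEuclideanCLM {𝕜 : Type*} [RCLike 𝕜] (A : Matrix n n 𝕜) (i j : n) :
    ‖A i j‖ ≤ ‖toEuclideanCLM (𝕜 := 𝕜) A‖ :=
  calc ‖A i j‖ = ‖toEuclideanCLM (𝕜 := 𝕜) A (EuclideanSpace.single j 1) i‖ := by simp
    _ ≤ ‖toEuclideanCLM (𝕜 := 𝕜) A (EuclideanSpace.single j 1)‖ := PiLp.norm_apply_le _ _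
    _ ≤ ‖toEuclideanCLM (𝕜 := 𝕜) A‖ * ‖EuclideanSpace.single j (1 : 𝕜)‖ :=
      ContinuousLinearMap.le_opNorm _ _
    _ = ‖toEuclideanCLM (𝕜 := 𝕜) A‖ := by simp

theorem eq_zero_of_mem_matrix_bot_of_norm_toEuclideanCLM_lt_one {A : Matrix n n ℝ}
    (hA : A ∈ (⊥ : Subring ℝ).matrix) (h : ‖toEuclideanCLM (𝕜 := ℝ) A‖ < 1) : A = 0 := by
  ext i j
  obtain ⟨k, hk⟩ := Subring.mem_bot.1 (hA i j)
  have hk1 : |(k : ℝ)| < 1 := hk ▸ (norm_apply_le_norm_toEuclideanCLM A i j).trans_lt h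
  have hk0 : k = 0 := by
    rw [← Int.cast_abs, ← Int.cast_one, Int.cast_lt] at hk1
    exact Int.abs_lt_one_iff.1 hk1
  simp [← hk, hk0]

end Matrix

theorem wordProd_mem {s J n : ℕ} {A : Fin J → Matrix (Fin s) (Fin s) ℝ}
    (S : Submonoid (Matrix (Fin s) (Fin s) ℝ)) (hA : ∀ j, A j ∈ S) (w : Fin n → Fin J) :
    wordProd A w ∈ S :=
  S.list_prod_mem (by simp [hA])

section JSR

variable {s J : ℕ} (A : Fin J → Matrix (Fin s) (Fin s) ℝ)

theorem JSR_nonneg : 0 ≤ JSR A :=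
  le_ciInf fun _ => Real.iSup_nonneg fun _ => Real.rpow_nonneg (norm_nonneg _) _

theorem exists_forall_l2OpNorm_wordProd_lt_one_of_JSR_lt_one (h : JSR A < 1) :
    ∃ n ≥ 1, ∀ w : Fin n → Fin J, l2OpNorm (wordProd A w) < 1 := by
  obtain ⟨⟨n, hn⟩, hlt⟩ := exists_lt_of_ciInf_lt h
  refine ⟨n, hn, fun w => ?_⟩
  have hroot := (le_ciSup (Set.finite_range _).bddAbove w).trans_lt hlt
  have hn' : (0 : ℝ) ≤ 1 / n := by positivity
  exact lt_of_not_ge fun h1 => hroot.not_ge (Real.one_le_rpow h1 hn')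

theorem JSR_eq_zero_of_forall_wordProd_eq_zero {n : ℕ} (hn : 1 ≤ n)
    (h : ∀ w : Fin n → Fin J, wordProd A w = 0) : JSR A = 0 := by
  refine le_antisymm ((ciInf_le ⟨0, ?_⟩ ⟨n, hn⟩).trans (Real.iSup_le (fun w => ?_) le_rfl))
    (JSR_nonneg A)
  · rintro _ ⟨m, rfl⟩
    exact Real.iSup_nonneg fun _ => Real.rpow_nonneg (norm_nonneg _) _
  · have hn' : (1 / n : ℝ) ≠ 0 := by positivity
    rw [show wordProd A w = 0 from h w, l2OpNorm, map_zero, norm_zero, Real.zero_rpow hn']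

theorem JSR_eq_zero_of_JSR_lt_one_of_mem_matrix_bot (hA : ∀ j, A j ∈ (⊥ : Subring ℝ).matrix)
    (h : JSR A < 1) : JSR A = 0 := by
  obtain ⟨n, hn, hnorm⟩ := exists_forall_l2OpNorm_wordProd_lt_one_of_JSR_lt_one A h
  exact JSR_eq_zero_of_forall_wordProd_eq_zero A hn fun w =>
    eq_zero_of_mem_matrix_bot_of_norm_toEuclideanCLM_lt_one
      (wordProd_mem (⊥ : Subring ℝ).matrix.toSubmonoid hA w) (hnorm w)

end JSR

/-- The JSR of a pair of integer matrices is never strictly between 0 and 1. -/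
theorem jsr_int_not_between_zero_and_one {s : ℕ}
    (A₁ A₂ : Matrix (Fin s) (Fin s) ℝ)
    (h₁ : ∀ i j, ∃ k : ℤ, A₁ i j = k)
    (h₂ : ∀ i j, ∃ k : ℤ, A₂ i j = k) :
    JSR ![A₁, A₂] = 0 ∨ 1 ≤ JSR ![A₁, A₂] := by
  have hint : ∀ j, ![A₁, A₂] j ∈ (⊥ : Subring ℝ).matrix := by
    simp only [Fin.forall_fin_two, cons_val_zero, cons_val_one]
    exact ⟨fun i j => Subring.mem_bot.2 ((h₁ i j).imp fun _ => Eq.symm),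
      fun i j => Subring.mem_bot.2 ((h₂ i j).imp fun _ => Eq.symm)⟩
  exact (lt_or_ge _ 1).imp_left (JSR_eq_zero_of_JSR_lt_one_of_mem_matrix_bot _ hint)
end

section
/- Let A₁, A₂ be real s×s matrices all of whose entries are nonnegative integers. If A₁·A₂ ≤ A₁·A₁ entrywise, then the pair (A₁, A₂) has the finiteness property. -/
open Matrix

/-!
Since `A₁ A₂ ≤ A₁ A₁`, an `A₁` standing left of a block `A₂ᵇ` may turn it into `A₁ᵇ`, so every
word `W` with `a` letters `A₁` and `b` letters `A₂` satisfies `0 ≤ W ≤ A₂ᵇ A₁ᵃ` entrywise. The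
operator norm is monotone on entrywise nonnegative matrices, so `‖W‖ ≤ ‖A₂ᵇ‖ ‖A₁ᵃ‖`, which
Gelfand's formula bounds by `C (ρ + ε)ⁿ` with `ρ = max (ρ(A₁), ρ(A₂))`. Hence the joint spectral
radius is at most `ρ`; as `ρ(Aᵢ)ⁿ ≤ ‖Aᵢⁿ‖` it is exactly `ρ`, attained by a word of length one.
-/

open Filter WithLp
open scoped Matrix.Norms.L2Operator

namespace Matrix

variable {m n R : Type*}

/-- The entrywise order (the order in scope `MatrixOrder` is the Loewner order). -/
abbrev entrywisePartialOrder [PartialOrder R] : PartialOrder (Matrix m n R) :=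
  inferInstanceAs (PartialOrder (m → n → R))

attribute [local instance] entrywisePartialOrder

theorem entrywise_isOrderedRing [Fintype n] [DecidableEq n] [Semiring R] [PartialOrder R]
    [IsOrderedRing R] : IsOrderedRing (Matrix n n R) where
  add_le_add_left _ _ h _ i j := add_le_add (h i j) le_rfl
  zero_le_one i j := by
    rw [one_apply]
    split_ifs <;> simp
  mul_le_mul_of_nonneg_left _ hA _ _ h i j :=
    Finset.sum_le_sum fun k _ => mul_le_mul_of_nonneg_left (h k j) (hA i k)
  mul_le_mul_of_nonneg_right _ hC _ _ h i j :=
    Finset.sum_le_sum fun k _ => mul_le_mul_of_nonneg_right (h i k) (hC k j)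

end Matrix

attribute [local instance] Matrix.entrywisePartialOrder Matrix.entrywise_isOrderedRing

section OrderedSemiring

variable {R : Type*} [Semiring R] [PartialOrder R] [IsOrderedRing R] {a b : R}

theorem mul_pow_le_pow_succ (ha : 0 ≤ a) (hb : 0 ≤ b) (hab : a * b ≤ a * a) (k : ℕ) :
    a * b ^ k ≤ a ^ (k + 1) := by
  induction k with
  | zero => simp
  | succ k ih =>
    calc a * b ^ (k + 1) = a * b * b ^ k := by rw [pow_succ', mul_assoc]
      _ ≤ a * a * b ^ k := mul_le_mul_of_nonneg_right hab (pow_nonneg hb k)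
      _ = a * (a * b ^ k) := mul_assoc ..
      _ ≤ a * a ^ (k + 1) := mul_le_mul_of_nonneg_left ih ha
      _ = a ^ (k + 1 + 1) := (pow_succ' ..).symm

theorem exists_list_prod_mem_Icc_pow_mul_pow (ha : 0 ≤ a) (hb : 0 ≤ b) (hab : a * b ≤ a * a)
    (l : List R) (hl : ∀ x ∈ l, x = a ∨ x = b) :
    ∃ i j, i + j = l.length ∧ l.prod ∈ Set.Icc 0 (b ^ j * a ^ i) := by
  induction l with
  | nil => exact ⟨0, 0, rfl, by simp⟩
  | cons x l ih =>
    obtain ⟨i, j, hij, hl₀, hle⟩ := ih fun y hy => hl y (List.mem_cons_of_mem x hy)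
    rcases hl x List.mem_cons_self with hx | hx <;> subst x
    · refine ⟨i + j + 1, 0, by rw [List.length_cons, ← hij], mul_nonneg ha hl₀, ?_⟩
      calc a * l.prod ≤ a * (b ^ j * a ^ i) := mul_le_mul_of_nonneg_left hle ha
        _ = a * b ^ j * a ^ i := (mul_assoc ..).symm
        _ ≤ a ^ (j + 1) * a ^ i :=
          mul_le_mul_of_nonneg_right (mul_pow_le_pow_succ ha hb hab j) (pow_nonneg ha i)
        _ = b ^ 0 * a ^ (i + j + 1) := by
          rw [← pow_add, pow_zero, one_mul, add_right_comm, add_comm j]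
    · refine ⟨i, j + 1, by rw [List.length_cons, ← hij, add_assoc], mul_nonneg hb hl₀, ?_⟩
      calc b * l.prod ≤ b * (b ^ j * a ^ i) := mul_le_mul_of_nonneg_left hle hb
        _ = b ^ (j + 1) * a ^ i := by rw [← mul_assoc, pow_succ']

end OrderedSemiring

theorem EuclideanSpace.norm_le_norm_of_forall_norm_le {𝕜 n : Type*} [RCLike 𝕜] [Fintype n]
    {x y : EuclideanSpace 𝕜 n} (h : ∀ i, ‖x i‖ ≤ ‖y i‖) : ‖x‖ ≤ ‖y‖ := by
  rw [← sq_le_sq₀ (norm_nonneg _) (norm_nonneg _), EuclideanSpace.norm_sq_eq,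
    EuclideanSpace.norm_sq_eq]
  gcongr with i
  exact h i

theorem EuclideanSpace.norm_sq_eq_re_add_im {n : Type*} [Fintype n] (z : EuclideanSpace ℂ n) :
    ‖z‖ ^ 2 = ‖toLp 2 fun i => (z i).re‖ ^ 2 + ‖toLp 2 fun i => (z i).im‖ ^ 2 := by
  simp only [EuclideanSpace.norm_sq_eq, ← Finset.sum_add_distrib, Complex.sq_norm,
    Complex.normSq_apply, Real.norm_eq_abs, sq_abs, ← sq]

namespace Matrix

variable {m n : Type*} [Fintype n]

theorem map_ofReal_mulVec_re (A : Matrix m n ℝ) (v : n → ℂ) (i : m) :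
    ((A.map Complex.ofReal *ᵥ v) i).re = (A *ᵥ fun j => (v j).re) i := by
  simp [mulVec, dotProduct, Complex.re_sum]

theorem map_ofReal_mulVec_im (A : Matrix m n ℝ) (v : n → ℂ) (i : m) :
    ((A.map Complex.ofReal *ᵥ v) i).im = (A *ᵥ fun j => (v j).im) i := by
  simp [mulVec, dotProduct, Complex.im_sum]

variable [Fintype m]

theorem norm_sq_map_ofReal_mulVec (A : Matrix m n ℝ) (z : EuclideanSpace ℂ n) :
    ‖toLp 2 (A.map Complex.ofReal *ᵥ z)‖ ^ 2 =
      ‖toLp 2 (A *ᵥ fun j => (z j).re)‖ ^ 2 + ‖toLp 2 (A *ᵥ fun j => (z j).im)‖ ^ 2 := by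
  rw [EuclideanSpace.norm_sq_eq_re_add_im]
  simp only [map_ofReal_mulVec_re, map_ofReal_mulVec_im]

variable [DecidableEq n]

theorem norm_toLp_mulVec_le {𝕜 : Type*} [RCLike 𝕜] (A : Matrix m n 𝕜) (v : n → 𝕜) :
    ‖toLp 2 (A *ᵥ v)‖ ≤ ‖A‖ * ‖toLp 2 v‖ :=
  A.l2_opNorm_mulVec (toLp 2 v)

theorem l2_opNorm_le_of_nonneg_of_le {A B : Matrix m n ℝ} (hA : 0 ≤ A) (hAB : A ≤ B) :
    ‖A‖ ≤ ‖B‖ := by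
  rw [l2_opNorm_def]
  refine ContinuousLinearMap.opNorm_le_bound _ (norm_nonneg _) fun x => ?_
  change ‖toLp 2 (A *ᵥ x)‖ ≤ ‖B‖ * ‖x‖
  have hx : ‖toLp 2 fun j => |x j|‖ = ‖x‖ := by simp [EuclideanSpace.norm_eq]
  calc ‖toLp 2 (A *ᵥ x)‖ ≤ ‖toLp 2 (B *ᵥ fun j => |x j|)‖ := by
        refine EuclideanSpace.norm_le_norm_of_forall_norm_le fun i => ?_
        calc |(A *ᵥ x) i| ≤ ∑ j, A i j * |x j| := by
              simpa only [mulVec, dotProduct, abs_mul, abs_of_nonneg (hA i _)]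
                using Finset.abs_sum_le_sum_abs (fun j => A i j * x j) Finset.univ
          _ ≤ ∑ j, B i j * |x j| := by
              gcongr with j
              exact hAB i j
          _ ≤ _ := le_abs_self _
    _ ≤ ‖B‖ * ‖x‖ := hx ▸ B.norm_toLp_mulVec_le _

theorem l2_opNorm_map_ofReal (A : Matrix m n ℝ) : ‖A.map Complex.ofReal‖ = ‖A‖ := by
  apply le_antisymm
  · rw [l2_opNorm_def]
    refine ContinuousLinearMap.opNorm_le_bound _ (norm_nonneg _) fun z => ?_
    change ‖toLp 2 (A.map Complex.ofReal *ᵥ z)‖ ≤ ‖A‖ * ‖z‖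
    rw [← sq_le_sq₀ (norm_nonneg _) (mul_nonneg (norm_nonneg _) (norm_nonneg _)), mul_pow,
      EuclideanSpace.norm_sq_eq_re_add_im z, mul_add, norm_sq_map_ofReal_mulVec]
    gcongr <;> rw [← mul_pow] <;> gcongr <;> exact A.norm_toLp_mulVec_le _
  · rw [l2_opNorm_def]
    refine ContinuousLinearMap.opNorm_le_bound _ (norm_nonneg _) fun x => ?_
    change ‖toLp 2 (A *ᵥ x)‖ ≤ ‖A.map Complex.ofReal‖ * ‖x‖
    set z : EuclideanSpace ℂ n := toLp 2 fun j => (x j : ℂ)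
    have hz : ‖z‖ = ‖x‖ := by simp [z, EuclideanSpace.norm_eq]
    have hAz := norm_sq_map_ofReal_mulVec A z
    simp only [z, Complex.ofReal_re, Complex.ofReal_im, ← Pi.zero_def, mulVec_zero, toLp_zero,
      norm_zero, zero_pow two_ne_zero, add_zero] at hAz
    rw [← sq_le_sq₀ (norm_nonneg _) (mul_nonneg (norm_nonneg _) (norm_nonneg _)), ← hAz, ← hz,
      sq_le_sq₀ (norm_nonneg _) (mul_nonneg (norm_nonneg _) (norm_nonneg _))]
    exact norm_toLp_mulVec_le _ _

theorem map_ofReal_pow (A : Matrix n n ℝ) (k : ℕ) :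
    (A ^ k).map Complex.ofReal = A.map Complex.ofReal ^ k :=
  A.map_pow Complex.ofRealHom k

theorem spectralRadius_map_ofReal_pow_le (A : Matrix n n ℝ) {k : ℕ} (hk : k ≠ 0) :
    spectralRadius ℂ (A.map Complex.ofReal) ^ k ≤ ‖A ^ k‖₊ := by
  rcases isEmpty_or_nonempty n with hn | hn
  · simp [spectrum.SpectralRadius.of_subsingleton, hk]
  calc spectralRadius ℂ (A.map Complex.ofReal) ^ k
      ≤ spectralRadius ℂ (A.map Complex.ofReal ^ k) := spectrum.spectralRadius_pow_le _ k hk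
    _ ≤ ‖A.map Complex.ofReal ^ k‖₊ := spectrum.spectralRadius_le_nnnorm _
    _ = ‖A ^ k‖₊ := by
        rw [← map_ofReal_pow]
        exact congrArg _ (Subtype.ext (l2_opNorm_map_ofReal _))

end Matrix

theorem exists_norm_pow_le_mul_pow_of_spectralRadius_lt {A : Type*} [NormedRing A]
    [NormedAlgebra ℂ A] [CompleteSpace A] (a : A) {r : ℝ}
    (hr : spectralRadius ℂ a < ENNReal.ofReal r) : ∃ C, ∀ k : ℕ, ‖a ^ k‖ ≤ C * r ^ k := by
  have hr₀ : 0 < r := ENNReal.ofReal_pos.mp (pos_of_gt hr)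
  have hev : ∀ᶠ k : ℕ in atTop, ‖a ^ k‖ / r ^ k ≤ 1 := by
    filter_upwards [(spectrum.pow_norm_pow_one_div_tendsto_nhds_spectralRadius a).eventually_lt_const
      hr, eventually_ne_atTop 0] with k hk hk₀
    rw [div_le_one (pow_pos hr₀ k), ← Real.rpow_inv_natCast_pow (norm_nonneg (a ^ k)) hk₀]
    rw [ENNReal.ofReal_lt_ofReal_iff hr₀, one_div] at hk
    exact pow_le_pow_left₀ (by positivity) hk.le k
  obtain ⟨C, hC⟩ := (isBoundedUnder_of_eventually_le hev).bddAbove_range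
  refine ⟨C, fun k => ?_⟩
  rw [← div_le_iff₀ (pow_pos hr₀ k)]
  exact hC ⟨k, rfl⟩

section JointSpectralRadius

variable {s J : ℕ}

theorem l2OpNorm_eq_norm (A : Matrix (Fin s) (Fin s) ℝ) : l2OpNorm A = ‖A‖ := rfl

theorem specRad_nonneg (A : Matrix (Fin s) (Fin s) ℝ) : 0 ≤ specRad A := ENNReal.toReal_nonneg

theorem specRad_pow_le_l2OpNorm_pow (A : Matrix (Fin s) (Fin s) ℝ) {k : ℕ} (hk : k ≠ 0) :
    specRad A ^ k ≤ l2OpNorm (A ^ k) := by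
  rw [specRad, ← ENNReal.toReal_pow]
  exact ENNReal.toReal_mono ENNReal.coe_ne_top (A.spectralRadius_map_ofReal_pow_le hk)

theorem exists_l2OpNorm_pow_le_mul_pow (A : Matrix (Fin s) (Fin s) ℝ) {r : ℝ}
    (hr : specRad A < r) : ∃ C, ∀ k : ℕ, l2OpNorm (A ^ k) ≤ C * r ^ k := by
  have hfin : spectralRadius ℂ (A.map Complex.ofReal) ≠ ⊤ := by
    simpa using ne_top_of_le_ne_top ENNReal.coe_ne_top
      (A.spectralRadius_map_ofReal_pow_le one_ne_zero)
  obtain ⟨C, hC⟩ := exists_norm_pow_le_mul_pow_of_spectralRadius_lt (A.map Complex.ofReal)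
    ((ENNReal.lt_ofReal_iff_toReal_lt hfin).mpr hr)
  exact ⟨C, fun k => by simpa only [l2OpNorm_eq_norm, ← map_ofReal_pow, l2_opNorm_map_ofReal] using hC k⟩

theorem wordProd_const (A : Fin J → Matrix (Fin s) (Fin s) ℝ) (n : ℕ) (i : Fin J) :
    wordProd A (fun _ : Fin n => i) = A i ^ n := by
  rw [wordProd, List.ofFn_const, List.reverse_replicate, List.prod_replicate]

theorem bddBelow_range_iSup_l2OpNorm_wordProd (A : Fin J → Matrix (Fin s) (Fin s) ℝ) :
    BddBelow (Set.range fun n : {m : ℕ // 1 ≤ m} => ⨆ w : Fin (n : ℕ) → Fin J,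
      l2OpNorm (wordProd A w) ^ (1 / ((n : ℕ) : ℝ))) :=
  ⟨0, by
    rintro _ ⟨n, rfl⟩
    exact Real.iSup_nonneg fun w => Real.rpow_nonneg (norm_nonneg _) _⟩

theorem specRad_le_JSR (A : Fin J → Matrix (Fin s) (Fin s) ℝ) (i : Fin J) :
    specRad (A i) ≤ JSR A := by
  refine le_ciInf fun ⟨n, hn⟩ => ?_
  have hn₀ : n ≠ 0 := by omega
  calc specRad (A i) = (specRad (A i) ^ n) ^ (1 / (n : ℝ)) := by
        rw [one_div, Real.pow_rpow_inv_natCast (specRad_nonneg _) hn₀]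
    _ ≤ l2OpNorm (wordProd A fun _ : Fin n => i) ^ (1 / (n : ℝ)) := by
        rw [wordProd_const]
        gcongr
        · exact pow_nonneg (specRad_nonneg _) n
        · exact specRad_pow_le_l2OpNorm_pow _ hn₀
    _ ≤ _ := le_ciSup (f := fun w : Fin n → Fin J => l2OpNorm (wordProd A w) ^ (1 / (n : ℝ)))
        (Set.finite_range _).bddAbove (fun _ => i)

theorem JSR_le_of_l2OpNorm_wordProd_le (A : Fin J → Matrix (Fin s) (Fin s) ℝ) {C r : ℝ}
    (hr : 0 ≤ r) (h : ∀ n (w : Fin n → Fin J), l2OpNorm (wordProd A w) ≤ C * r ^ n) :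
    JSR A ≤ r := by
  set C' := max C 1
  have hC' : 0 < C' := lt_max_of_lt_right one_pos
  have hJ : ∀ n : ℕ, 1 ≤ n → JSR A ≤ C' ^ (1 / (n : ℝ)) * r := fun n hn => by
    refine (ciInf_le (bddBelow_range_iSup_l2OpNorm_wordProd A) ⟨n, hn⟩).trans
      (Real.iSup_le (fun w => ?_) (by positivity))
    calc l2OpNorm (wordProd A w) ^ (1 / (n : ℝ)) ≤ (C' * r ^ n) ^ (1 / (n : ℝ)) := by
          gcongr
          · exact norm_nonneg _
          · exact (h n w).trans (by gcongr; exact le_max_left _ _)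
      _ = C' ^ (1 / (n : ℝ)) * r := by
          rw [Real.mul_rpow hC'.le (by positivity), one_div,
            Real.pow_rpow_inv_natCast hr (by omega)]
  have hlim : Tendsto (fun n : ℕ => C' ^ (1 / (n : ℝ)) * r) atTop (nhds r) := by
    simpa using ((tendsto_const_nhds (x := C')).rpow tendsto_one_div_atTop_nhds_zero_nat
      (Or.inl hC'.ne')).mul_const r
  exact ge_of_tendsto hlim (eventually_atTop.mpr ⟨1, hJ⟩)

theorem finitenessProperty_of_JSR_eq_specRad {A : Fin 2 → Matrix (Fin s) (Fin s) ℝ} (i : Fin 2)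
    (h : JSR A = specRad (A i)) : FinitenessProperty A :=
  ⟨1, le_rfl, fun _ => i, by rw [wordProd_const, pow_one, h, Nat.cast_one, div_one, Real.rpow_one]⟩

end JointSpectralRadius

theorem exists_wordProd_mem_Icc_pow_mul_pow {s n : ℕ} {A₁ A₂ : Matrix (Fin s) (Fin s) ℝ}
    (h₁ : 0 ≤ A₁) (h₂ : 0 ≤ A₂) (hle : A₁ * A₂ ≤ A₁ * A₁) (w : Fin n → Fin 2) :
    ∃ a b, a + b = n ∧ wordProd ![A₁, A₂] w ∈ Set.Icc 0 (A₂ ^ b * A₁ ^ a) := by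
  simpa [wordProd] using exists_list_prod_mem_Icc_pow_mul_pow h₁ h₂ hle
    (List.ofFn fun i => ![A₁, A₂] (w i)).reverse fun x hx => by
      obtain ⟨i, rfl⟩ := List.mem_ofFn.mp (List.mem_reverse.mp hx)
      generalize w i = j
      fin_cases j
      exacts [.inl rfl, .inr rfl]

/-- If `A₁·A₂ ≤ A₁·A₁` entrywise for nonnegative-integer matrices then the pair
has the finiteness property. -/
theorem finiteness_property_of_mul_le {s : ℕ}
    (A₁ A₂ : Matrix (Fin s) (Fin s) ℝ)
    (h₁ : ∀ i j, ∃ k : ℕ, A₁ i j = k)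
    (h₂ : ∀ i j, ∃ k : ℕ, A₂ i j = k)
    (hle : ∀ i j, (A₁ * A₂) i j ≤ (A₁ * A₁) i j) :
    FinitenessProperty ![A₁, A₂] := by
  have hA₁ : 0 ≤ A₁ := fun i j => (h₁ i j).elim fun k hk => hk ▸ k.cast_nonneg
  have hA₂ : 0 ≤ A₂ := fun i j => (h₂ i j).elim fun k hk => hk ▸ k.cast_nonneg
  obtain ⟨i, hi⟩ := Finite.exists_max fun j => specRad (![A₁, A₂] j)
  refine finitenessProperty_of_JSR_eq_specRad i (le_antisymm ?_ (specRad_le_JSR _ i))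
  refine le_of_forall_gt_imp_ge_of_dense fun r hr => ?_
  obtain ⟨C₁, hC₁⟩ := exists_l2OpNorm_pow_le_mul_pow A₁ ((hi 0).trans_lt hr)
  obtain ⟨C₂, hC₂⟩ := exists_l2OpNorm_pow_le_mul_pow A₂ ((hi 1).trans_lt hr)
  refine JSR_le_of_l2OpNorm_wordProd_le _ (C := C₂ * C₁) ((specRad_nonneg _).trans hr.le)
    fun n w => ?_
  obtain ⟨a, b, rfl, hW₀, hW⟩ := exists_wordProd_mem_Icc_pow_mul_pow hA₁ hA₂ hle w
  calc l2OpNorm (wordProd ![A₁, A₂] w) ≤ l2OpNorm (A₂ ^ b) * l2OpNorm (A₁ ^ a) :=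
        (l2_opNorm_le_of_nonneg_of_le hW₀ hW).trans (norm_mul_le _ _)
    _ ≤ C₂ * r ^ b * (C₁ * r ^ a) :=
        mul_le_mul (hC₂ b) (hC₁ a) (norm_nonneg _) ((norm_nonneg _).trans (hC₂ b))
    _ = C₂ * C₁ * r ^ (a + b) := by ring
end

section
/- Let A₁ = (1/√2)·[[0,0,-1],[0,0,0],[0,1,0]] and A₂ = (1/√2)·[[1,0,-1],[0,0,-1],[-1,0,-1]] be real 3×3 matrices. Then A₂ is the only spectral maximizing product of the pair (A₁, A₂): for every n ≥ 1 and every word w : Fin n → Fin 2 such that w is not constantly equal to the index of A₂ (i.e., the product A_{w(n-1)} · ⋯ · A_{w(0)} contains at least one factor A₁), the spectral radius satisfies ρ(A_{w(n-1)} · ⋯ · A_{w(0)}) < 1 = JSR(A₁, A₂). -/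
open Matrix

noncomputable def exA₁ : Matrix (Fin 3) (Fin 3) ℝ :=
  (Real.sqrt 2)⁻¹ • !![0, 0, -1; 0, 0, 0; 0, 1, 0]

noncomputable def exA₂ : Matrix (Fin 3) (Fin 3) ℝ :=
  (Real.sqrt 2)⁻¹ • !![1, 0, -1; 0, 0, -1; -1, 0, -1]

/-!
The quadratic form `Q = lyapunovForm` is an extremal norm for the pair: `Q (A₂ x) ≤ Q x` and
`Q (A₁ x) ≤ 3/4 · Q x`. Since `Q` is equivalent to the square of the Euclidean norm, all products
are uniformly bounded, so `JSR ≤ 1`, while `A₂` fixes a nonzero vector, so `JSR ≥ 1`. A product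
containing `A₁` contracts `Q` by `3/4`; if `Bz = μz` with `z = u + iv`, then
`Q (Bu) + Q (Bv) = |μ|² (Q u + Q v)`, so every eigenvalue has `|μ|² ≤ 3/4`.
-/

section Contracts

variable {ι : Type*} [Fintype ι]

def Contracts (Q : (ι → ℝ) → ℝ) (c : ℝ) (B : Matrix ι ι ℝ) : Prop :=
  ∀ x, Q (B *ᵥ x) ≤ c * Q x

variable {Q : (ι → ℝ) → ℝ} {c d : ℝ} {B C : Matrix ι ι ℝ}

theorem Contracts.one [DecidableEq ι] : Contracts Q 1 1 := fun x => by simp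

theorem Contracts.mul (hc : 0 ≤ c) (hB : Contracts Q c B) (hC : Contracts Q d C) :
    Contracts Q (c * d) (B * C) := fun x => by
  rw [← mulVec_mulVec, mul_assoc]
  exact (hB _).trans (mul_le_mul_of_nonneg_left (hC x) hc)

theorem Contracts.mono (hQ : ∀ x, 0 ≤ Q x) (hcd : c ≤ d) (hB : Contracts Q c B) :
    Contracts Q d B :=
  fun x => (hB x).trans (mul_le_mul_of_nonneg_right hcd (hQ x))

theorem Contracts.list_prod [DecidableEq ι] {L : List (Matrix ι ι ℝ)}
    (hL : ∀ M ∈ L, Contracts Q 1 M) : Contracts Q 1 L.prod :=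
  List.prod_induction _ (fun _ _ hB hC => by simpa using hB.mul zero_le_one hC) Contracts.one hL

theorem Contracts.list_prod_of_mem [DecidableEq ι] {L : List (Matrix ι ι ℝ)} (hc : 0 ≤ c)
    (hL : ∀ M ∈ L, Contracts Q 1 M) (hBL : B ∈ L) (hB : Contracts Q c B) :
    Contracts Q c L.prod := by
  obtain ⟨L₁, L₂, rfl⟩ := List.append_of_mem hBL
  have h₁ : Contracts Q 1 L₁.prod := list_prod fun M hM => hL M (by simp [hM])
  have h₂ : Contracts Q 1 L₂.prod := list_prod fun M hM => hL M (by simp [hM])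
  rw [List.prod_append, List.prod_cons, ← mul_assoc]
  simpa using (h₁.mul zero_le_one hB).mul (by simpa using hc) h₂

variable {s J n : ℕ} {Q : (Fin s → ℝ) → ℝ} {A : Fin J → Matrix (Fin s) (Fin s) ℝ}

theorem contracts_wordProd (hA : ∀ j, Contracts Q 1 (A j)) (w : Fin n → Fin J) :
    Contracts Q 1 (wordProd A w) :=
  .list_prod fun M hM => by
    obtain ⟨i, rfl⟩ := List.mem_ofFn.mp (List.mem_reverse.mp hM)
    exact hA (w i)

theorem contracts_wordProd_of_apply (hc : 0 ≤ c) (hA : ∀ j, Contracts Q 1 (A j))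
    {w : Fin n → Fin J} (i : Fin n) (hi : Contracts Q c (A (w i))) :
    Contracts Q c (wordProd A w) :=
  .list_prod_of_mem hc (fun M hM => by
    obtain ⟨i, rfl⟩ := List.mem_ofFn.mp (List.mem_reverse.mp hM)
    exact hA (w i)) (by simp) hi

end Contracts

section JointSpectralRadius

variable {s J : ℕ}

theorem l2OpNorm_le_of_contracts {Q : (Fin s → ℝ) → ℝ} {m M : ℝ} (hm : 0 < m)
    (hlow : ∀ x, m * ∑ i, x i ^ 2 ≤ Q x) (hup : ∀ x, Q x ≤ M * ∑ i, x i ^ 2)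
    {B : Matrix (Fin s) (Fin s) ℝ} (hB : Contracts Q 1 B) : l2OpNorm B ≤ √(M / m) := by
  refine ContinuousLinearMap.opNorm_le_bound _ (Real.sqrt_nonneg _) fun y => ?_
  obtain ⟨x, rfl⟩ : ∃ x, WithLp.toLp 2 x = y := ⟨y.ofLp, rfl⟩
  have hsq : ∑ i, (B *ᵥ x) i ^ 2 ≤ M / m * ∑ i, x i ^ 2 := by
    rw [div_mul_eq_mul_div, le_div_iff₀' hm]
    linarith [hlow (B *ᵥ x), hB x, hup x]
  simp only [toEuclideanCLM_toLp, EuclideanSpace.norm_eq, Real.norm_eq_abs, sq_abs]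
  rw [← Real.sqrt_mul' _ (Finset.sum_nonneg fun i _ => sq_nonneg (x i))]
  exact Real.sqrt_le_sqrt hsq

theorem one_le_l2OpNorm_of_mulVec_eq_self {B : Matrix (Fin s) (Fin s) ℝ} {v : Fin s → ℝ}
    (hv : v ≠ 0) (hBv : B *ᵥ v = v) : 1 ≤ l2OpNorm B := by
  have hpos : 0 < ‖WithLp.toLp 2 v‖ := norm_pos_iff.mpr (by simpa using hv)
  have h := (toEuclideanCLM (𝕜 := ℝ) B).le_opNorm (WithLp.toLp 2 v)
  rw [toEuclideanCLM_toLp, hBv] at h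
  exact le_of_mul_le_mul_right (by rwa [one_mul]) hpos

theorem wordProd_const_mulVec_eq_self {A : Fin J → Matrix (Fin s) (Fin s) ℝ} {j : Fin J}
    {v : Fin s → ℝ} (hAv : A j *ᵥ v = v) (n : ℕ) :
    wordProd A (fun _ : Fin n => j) *ᵥ v = v :=
  List.prod_induction (· *ᵥ v = v) (fun _ _ hB hC => by rw [← mulVec_mulVec, hC, hB])
    (one_mulVec v) (by simpa using fun _ => hAv)

theorem one_le_JSR_of_mulVec_eq_self {A : Fin J → Matrix (Fin s) (Fin s) ℝ} {j : Fin J}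
    {v : Fin s → ℝ} (hv : v ≠ 0) (hAv : A j *ᵥ v = v) : 1 ≤ JSR A :=
  le_ciInf fun n =>
    (Real.one_le_rpow (one_le_l2OpNorm_of_mulVec_eq_self hv
      (wordProd_const_mulVec_eq_self hAv n)) (by positivity)).trans
    (le_ciSup (f := fun w : Fin n → Fin J => l2OpNorm (wordProd A w) ^ (1 / (n : ℝ)))
      (Set.finite_range _).bddAbove fun _ => j)

theorem JSR_le_one_of_l2OpNorm_le {A : Fin J → Matrix (Fin s) (Fin s) ℝ} {K : ℝ}
    (hK : ∀ n (w : Fin n → Fin J), l2OpNorm (wordProd A w) ≤ K) : JSR A ≤ 1 := by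
  set C := max K 1
  have hC : 0 < C := lt_max_of_lt_right one_pos
  have hJSR : ∀ n : {m : ℕ // 1 ≤ m}, JSR A ≤ C ^ (1 / (n : ℝ)) := fun n =>
    (ciInf_le ⟨0, Set.forall_mem_range.mpr fun _ => Real.iSup_nonneg fun _ =>
        Real.rpow_nonneg (norm_nonneg _) _⟩ n).trans
      (Real.iSup_le (fun w => Real.rpow_le_rpow (norm_nonneg _) ((hK n w).trans (le_max_left _ _))
        (by positivity)) (by positivity))
  have hlim : Filter.Tendsto (fun n : ℕ => C ^ (1 / (n : ℝ))) Filter.atTop (nhds 1) := by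
    simpa [Function.comp_def] using ((Real.continuousAt_const_rpow hC.ne').tendsto.comp
      tendsto_one_div_atTop_nhds_zero_nat)
  refine ge_of_tendsto hlim ?_
  filter_upwards [Filter.eventually_ge_atTop 1] with n hn
  exact hJSR ⟨n, hn⟩

end JointSpectralRadius

theorem QuadraticMap.map_smul_sub_smul_add_map_smul_add_smul {R M : Type*} [CommRing R]
    [AddCommGroup M] [Module R M] (Q : QuadraticMap R M R) (a b : R) (u v : M) :
    Q (a • u - b • v) + Q (a • v + b • u) = (a ^ 2 + b ^ 2) * (Q u + Q v) := by
  rw [sub_eq_add_neg, QuadraticMap.map_add Q, QuadraticMap.map_add Q, QuadraticMap.map_neg,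
    polar_neg_right, polar_smul_left, polar_smul_right, polar_smul_left, polar_smul_right,
    polar_comm _ v u]
  simp only [QuadraticMap.map_smul, smul_eq_mul]
  ring

theorem Matrix.exists_mulVec_eq_smul_of_mem_spectrum {n K : Type*} [Fintype n] [DecidableEq n]
    [Field K] {M : Matrix n n K} {μ : K} (hμ : μ ∈ spectrum K M) :
    ∃ z ≠ 0, M *ᵥ z = μ • z := by
  rw [← AlgEquiv.spectrum_eq toLinAlgEquiv', ← Module.End.hasEigenvalue_iff_mem_spectrum] at hμ
  obtain ⟨z, hz⟩ := hμ.exists_hasEigenvector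
  exact ⟨z, hz.2, by simpa using hz.apply_eq_smul⟩

theorem Matrix.re_map_ofReal_mulVec {n : Type*} [Fintype n] (B : Matrix n n ℝ) (z : n → ℂ) :
    (fun i => ((B.map Complex.ofReal) *ᵥ z) i |>.re) = B *ᵥ fun i => (z i).re := by
  ext i
  simp [mulVec, dotProduct, Complex.re_sum]

theorem Matrix.im_map_ofReal_mulVec {n : Type*} [Fintype n] (B : Matrix n n ℝ) (z : n → ℂ) :
    (fun i => ((B.map Complex.ofReal) *ᵥ z) i |>.im) = B *ᵥ fun i => (z i).im := by
  ext i
  simp [mulVec, dotProduct, Complex.im_sum]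

theorem norm_sq_le_of_mem_spectrum_of_contracts {ι : Type*} [Fintype ι] [DecidableEq ι]
    {Q : QuadraticForm ℝ (ι → ℝ)} {c : ℝ} {B : Matrix ι ι ℝ} (hQ : Q.PosDef)
    (hB : Contracts Q c B) {μ : ℂ} (hμ : μ ∈ spectrum ℂ (B.map Complex.ofReal)) :
    ‖μ‖ ^ 2 ≤ c := by
  obtain ⟨z, hz, hBz⟩ := exists_mulVec_eq_smul_of_mem_spectrum hμ
  set u : ι → ℝ := fun i => (z i).re
  set v : ι → ℝ := fun i => (z i).im
  have hBu : B *ᵥ u = μ.re • u - μ.im • v := by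
    rw [← re_map_ofReal_mulVec, hBz]
    ext i
    simp [u, v]
  have hBv : B *ᵥ v = μ.re • v + μ.im • u := by
    rw [← im_map_ofReal_mulVec, hBz]
    ext i
    simp [u, v]
  have hpos : 0 < Q u + Q v := by
    obtain ⟨i, hi⟩ := Function.ne_iff.mp hz
    by_cases hu : u = 0
    · have hv : v ≠ 0 := fun hv => hi (Complex.ext (congrFun hu i) (congrFun hv i))
      exact add_pos_of_nonneg_of_pos (hQ.nonneg u) (hQ v hv)
    · exact add_pos_of_pos_of_nonneg (hQ u hu) (hQ.nonneg v)
  have key : ‖μ‖ ^ 2 * (Q u + Q v) ≤ c * (Q u + Q v) := by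
    rw [Complex.sq_norm, Complex.normSq_apply, ← sq, ← sq,
      ← QuadraticMap.map_smul_sub_smul_add_map_smul_add_smul, ← hBu, ← hBv, mul_add]
    exact add_le_add (hB u) (hB v)
  exact le_of_mul_le_mul_right key hpos

theorem specRad_le_sqrt_of_contracts {s : ℕ} {Q : QuadraticForm ℝ (Fin s → ℝ)} {c : ℝ}
    {B : Matrix (Fin s) (Fin s) ℝ} (hQ : Q.PosDef) (hB : Contracts Q c B) :
    specRad B ≤ √c := by
  refine ENNReal.toReal_le_of_le_ofReal (Real.sqrt_nonneg c) (iSup₂_le fun μ hμ => ?_)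
  have hμc := Real.abs_le_sqrt (norm_sq_le_of_mem_spectrum_of_contracts hQ hB hμ)
  rw [← enorm_eq_nnnorm, ← ofReal_norm]
  exact ENNReal.ofReal_le_ofReal (by rwa [abs_norm] at hμc)

theorem sqrt_two_bounds : 1.4 < √2 ∧ √2 < 1.5 :=
  ⟨by rw [Real.lt_sqrt] <;> norm_num, by rw [Real.sqrt_lt'] <;> norm_num⟩

noncomputable def lyapunovForm : QuadraticForm ℝ (Fin 3 → ℝ) :=
  Matrix.toQuadraticForm' !![6 + 2 * √2, -(3 + 2 * √2), 3;
    -(3 + 2 * √2), 6 + 4 * √2, -(3 + 2 * √2);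
    3, -(3 + 2 * √2), 9]

theorem lyapunovForm_apply (x : Fin 3 → ℝ) :
    lyapunovForm x = (6 + 2 * √2) * x 0 ^ 2 + (6 + 4 * √2) * x 1 ^ 2 + 9 * x 2 ^ 2
      - 2 * (3 + 2 * √2) * x 0 * x 1 + 6 * x 0 * x 2 - 2 * (3 + 2 * √2) * x 1 * x 2 := by
  rw [lyapunovForm, toQuadraticForm', LinearMap.BilinMap.toQuadraticMap_apply,
    toLinearMap₂'_apply']
  simp only [dotProduct, mulVec, Fin.sum_univ_three, of_apply, cons_val', cons_val_fin_one,
    cons_val_zero, cons_val_one, cons_val]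
  ring

theorem lyapunovForm_apply_vec (a b c : ℝ) :
    lyapunovForm ![a, b, c] = (6 + 2 * √2) * a ^ 2 + (6 + 4 * √2) * b ^ 2 + 9 * c ^ 2
      - 2 * (3 + 2 * √2) * a * b + 6 * a * c - 2 * (3 + 2 * √2) * b * c :=
  lyapunovForm_apply _

theorem lyapunovForm_inv_sqrt_two_smul (y : Fin 3 → ℝ) :
    lyapunovForm ((√2)⁻¹ • y) = lyapunovForm y / 2 := by
  rw [QuadraticMap.map_smul, ← mul_inv, Real.mul_self_sqrt zero_le_two, smul_eq_mul,
    inv_mul_eq_div]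

theorem three_mul_sum_sq_le_lyapunovForm (x : Fin 3 → ℝ) :
    3 * ∑ i, x i ^ 2 ≤ lyapunovForm x := by
  have hsq : √2 ^ 2 = 2 := Real.sq_sqrt zero_le_two
  have hc : 0 ≤ 16 * √2 - 21 := by linarith [sqrt_two_bounds.1]
  have hsos : lyapunovForm x - 3 * ∑ i, x i ^ 2
      = (3 + 2 * √2) * (x 0 - x 1 + (9 - 6 * √2) * x 2) ^ 2 + 2 * √2 * (x 1 - x 2) ^ 2
        + (16 * √2 - 21) * x 2 ^ 2 := by
    rw [lyapunovForm_apply, Fin.sum_univ_three]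
    linear_combination (108 * x 2 ^ 2 - 72 * x 2 ^ 2 * √2 - 24 * x 1 * x 2 + 24 * x 0 * x 2) * hsq
  have : 0 ≤ lyapunovForm x - 3 * ∑ i, x i ^ 2 := by rw [hsos]; positivity
  linarith

theorem lyapunovForm_le_mul_sum_sq (x : Fin 3 → ℝ) : lyapunovForm x ≤ 24 * ∑ i, x i ^ 2 := by
  have hhi := sqrt_two_bounds.2
  rw [lyapunovForm_apply, Fin.sum_univ_three]
  nlinarith [mul_nonneg (by positivity : (0 : ℝ) ≤ 3 + 2 * √2) (sq_nonneg (x 0 + x 1)),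
    mul_nonneg (by positivity : (0 : ℝ) ≤ 3 + 2 * √2) (sq_nonneg (x 1 + x 2)),
    sq_nonneg (x 0 - x 2), sq_nonneg (x 0), sq_nonneg (x 1), sq_nonneg (x 2)]

theorem lyapunovForm_posDef : lyapunovForm.PosDef := fun x hx => by
  obtain ⟨i, hi : x i ≠ 0⟩ := Function.ne_iff.mp hx
  have : 0 < ∑ i, x i ^ 2 :=
    Finset.sum_pos' (fun i _ => sq_nonneg (x i)) ⟨i, Finset.mem_univ i, by positivity⟩
  linarith [three_mul_sum_sq_le_lyapunovForm x]

theorem exA₁_mulVec (x : Fin 3 → ℝ) : exA₁ *ᵥ x = (√2)⁻¹ • ![-x 2, 0, x 1] := by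
  rw [exA₁, smul_mulVec]
  congr 1
  ext i
  fin_cases i <;> simp [mulVec, dotProduct, Fin.sum_univ_three]

theorem exA₂_mulVec (x : Fin 3 → ℝ) :
    exA₂ *ᵥ x = (√2)⁻¹ • ![x 0 - x 2, -x 2, -x 0 - x 2] := by
  rw [exA₂, smul_mulVec]
  congr 1
  ext i
  fin_cases i <;> simp [mulVec, dotProduct, Fin.sum_univ_three, sub_eq_add_neg]

theorem exA₂_mulVec_fixed : exA₂ *ᵥ ![2 + √2, 1, -√2] = ![2 + √2, 1, -√2] := by
  have hsq : √2 ^ 2 = 2 := Real.sq_sqrt zero_le_two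
  have hv : exA₂ *ᵥ ![2 + √2, 1, -√2]
      = (√2)⁻¹ • ![2 + √2 - -√2, - -√2, -(2 + √2) - -√2] := exA₂_mulVec _
  rw [hv, inv_smul_eq_iff₀ (by positivity), smul_vec3]
  simp only [smul_eq_mul]
  exact vec3_eq (by linear_combination -hsq) (by ring) (by linear_combination hsq)

theorem contracts_exA₂ : Contracts lyapunovForm 1 exA₂ := fun x => by
  have hsos : lyapunovForm x - lyapunovForm (exA₂ *ᵥ x)
      = (3 / 2 + √2) * (x 0 - 2 * x 1 + x 2) ^ 2 := by
    rw [exA₂_mulVec, lyapunovForm_inv_sqrt_two_smul, lyapunovForm_apply_vec, lyapunovForm_apply]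
    ring
  have : 0 ≤ lyapunovForm x - lyapunovForm (exA₂ *ᵥ x) := by rw [hsos]; positivity
  linarith

theorem contracts_exA₁ : Contracts lyapunovForm (3 / 4) exA₁ := fun x => by
  have hsq : √2 ^ 2 = 2 := Real.sq_sqrt zero_le_two
  obtain ⟨hlo, hhi⟩ := sqrt_two_bounds
  have hc₁ : 0 ≤ -81 / 56 + 111 / 56 * √2 := by linarith
  have hc₂ : 0 ≤ 2133 / 1148 - 691 / 574 * √2 := by linarith
  -- an `LDLᵀ` factorization; the coefficient of `hsq` is the difference of the two sides
  -- divided by `√2 ^ 2 - 2`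
  have hsos : 3 / 4 * lyapunovForm x - lyapunovForm (exA₁ *ᵥ x)
      = (9 / 2 + 3 / 2 * √2)
          * (x 0 + (-5 / 14 - 3 / 14 * √2) * x 1 + (9 / 14 - 3 / 14 * √2) * x 2) ^ 2
        + (-81 / 56 + 111 / 56 * √2) * (x 1 + (-197 / 287 - 68 / 287 * √2) * x 2) ^ 2
        + (2133 / 1148 - 691 / 574 * √2) * x 2 ^ 2 := by
    rw [exA₁_mulVec, lyapunovForm_inv_sqrt_two_smul, lyapunovForm_apply_vec, lyapunovForm_apply]
    linear_combination (-1646241 / 4612664 * x 2 ^ 2 - 830973 / 4612664 * x 2 ^ 2 * √2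
      + 5703 / 8036 * x 1 * x 2 - 27 / 196 * x 1 * x 2 * √2 - 171 / 392 * x 1 ^ 2
      - 27 / 392 * x 1 ^ 2 * √2 + 9 / 14 * x 0 * x 2 + 9 / 14 * x 0 * x 1) * hsq
  have : 0 ≤ 3 / 4 * lyapunovForm x - lyapunovForm (exA₁ *ᵥ x) := by rw [hsos]; positivity
  linarith

/-- `A₂` is the only spectral maximizing product of the pair `(A₁, A₂)`: the
JSR equals 1, and every product containing at least one factor `A₁` has
spectral radius strictly less than 1. -/
theorem smp_unique :
    JSR ![exA₁, exA₂] = 1 ∧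
      ∀ (n : ℕ), 1 ≤ n → ∀ w : Fin n → Fin 2, (∃ i, w i ≠ 1) →
        specRad (wordProd ![exA₁, exA₂] w) < 1 := by
  have hletters : ∀ j, Contracts lyapunovForm 1 (![exA₁, exA₂] j) := by
    intro j
    fin_cases j
    · exact contracts_exA₁.mono lyapunovForm_posDef.nonneg (by norm_num)
    · exact contracts_exA₂
  refine ⟨le_antisymm ?_ ?_, fun n _ w ⟨i, hi⟩ => ?_⟩
  · exact JSR_le_one_of_l2OpNorm_le fun n w => l2OpNorm_le_of_contracts (by norm_num)
      three_mul_sum_sq_le_lyapunovForm lyapunovForm_le_mul_sum_sq (contracts_wordProd hletters w)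
  · exact one_le_JSR_of_mulVec_eq_self (j := 1) (fun h => absurd (congrFun h 1) (by simp))
      exA₂_mulVec_fixed
  · have hwi : w i = 0 := by omega
    have hw : Contracts lyapunovForm (3 / 4) (wordProd ![exA₁, exA₂] w) :=
      contracts_wordProd_of_apply (by norm_num) hletters i (by simpa [hwi] using contracts_exA₁)
    calc specRad (wordProd ![exA₁, exA₂] w) ≤ √(3 / 4) :=
          specRad_le_sqrt_of_contracts lyapunovForm_posDef hw
      _ < 1 := by rw [Real.sqrt_lt' one_pos]; norm_num
end
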